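/- arXiv:1910.01291 — 3 statements merged into one kernel-verified Lean document; each statement's English description precedes it below -/
import Mathlib

section
/- Let M be a matroid with lattice of flats L and let F₁ ⊆ F₂ be flats of M. Then [rk(F₂) − rk(F₁)]_q = ∑_{F₁ ⊆ F ⊊ F₂, F ∈ L} χ̄_{M|F₂/F}(q), where χ̄ denotes the reduced characteristic polynomial. -/
open Polynomial

namespace MatroidZeta

open scoped Classical

variable {α : Type*}

/-- The `q`-analogue `[n]_q = 1 + q + ⋯ + q^(n-1)` of a natural number `n`, in `ℤ[q]`. -/
noncomputable def qAnalogue (n : ℕ) : Polynomial ℤ := ∑ i ∈ Finset.range n, X ^ i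

/-- The rank of a set `X` in a matroid `M`: the largest size of an independent subset of `X`. -/
noncomputable def rk (M : Matroid α) (X : Set α) : ℕ :=
  sSup {n | ∃ I, M.Indep I ∧ I ⊆ X ∧ I.ncard = n}

/-- Contraction `M / C` of a matroid, defined as the dual of the deletion of `C`
from the dual matroid. -/
noncomputable def contract (M : Matroid α) (C : Set α) : Matroid α :=
  ((M✶.restrict (M✶.E \ C))✶)

/-- A matroid is loopless if no element of the ground set lies in the closure of `∅`. -/
def Loopless (M : Matroid α) : Prop := M.closure ∅ = ∅

/-- The characteristic polynomial `χ_M(q) = ∑_{S ⊆ E} (-1)^{#S} q^(rk M - rk S)`. -/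
noncomputable def charPoly (M : Matroid α) : Polynomial ℤ :=
  ∑ᶠ S ∈ {S : Set α | S ⊆ M.E}, (-1 : ℤ) ^ S.ncard • (X : Polynomial ℤ) ^ (rk M M.E - rk M S)

/-- The reduced characteristic polynomial
`χ̄_M(q) = χ_M(q)/(q-1) = ∑_{S ⊆ E} (-1)^{#S} [rk M - rk S]_q`. -/
noncomputable def redCharPoly (M : Matroid α) : Polynomial ℤ :=
  ∑ᶠ S ∈ {S : Set α | S ⊆ M.E}, (-1 : ℤ) ^ S.ncard • qAnalogue (rk M M.E - rk M S)

/-- `wt_M(w) = max_{B basis of M} ∑_{e ∈ B} w e`. -/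
noncomputable def wt (M : Matroid α) (w : α → ℝ) : ℝ :=
  sSup {x | ∃ B, M.IsBase B ∧ x = ∑ᶠ e ∈ B, w e}

/-- The initial matroid `M_w`: the matroid on the ground set of `M` whose bases are the
bases of `M` of maximal `w`-weight.  (Such a matroid exists and is unique.) -/
noncomputable def initialMatroid (M : Matroid α) (w : α → ℝ) : Matroid α :=
  if h : ∃ N : Matroid α, N.E = M.E ∧
      ∀ B, N.IsBase B ↔ M.IsBase B ∧ ∑ᶠ e ∈ B, w e = wt M w
  then h.choose else M

/-- A flag of non-minimal flats of `M`: a chain of flats strictly above `cl(∅)`. -/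
def IsFlag (M : Matroid α) (C : Finset (Set α)) : Prop :=
  (∀ F ∈ C, M.IsFlat F ∧ M.closure ∅ ⊂ F) ∧ IsChain (· ⊆ ·) (C : Set (Set α))

/-- `N(M)`: the set of flags of non-minimal flats of `M`. -/
def flags (M : Matroid α) : Set (Finset (Set α)) := {C | IsFlag M C}

/-- `N°(M)`: flags not containing the ground set. -/
def flagsCirc (M : Matroid α) : Set (Finset (Set α)) := {C | IsFlag M C ∧ M.E ∉ C}

/-- `N*(M)`: flags containing the ground set. -/
def flagsStar (M : Matroid α) : Set (Finset (Set α)) := {C | IsFlag M C ∧ M.E ∈ C}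

/-- `z_C(F)`: the largest member of the chain `C` strictly below `F` (or `∅` if none). -/
def zmin (C : Finset (Set α)) (F : Set α) : Set α := ⋃₀ {G | G ∈ C ∧ G ⊂ F}

/-- The weight vector `∑_{F ∈ C} v_F`, a point in the relative interior of the cone `σ_C`. -/
noncomputable def flagWeight (C : Finset (Set α)) : α → ℝ :=
  fun e => ∑ F ∈ C, if e ∈ F then (1 : ℝ) else 0

/-- The initial matroid `M_C` of a flag `C`. -/
noncomputable def flagMatroid (M : Matroid α) (C : Finset (Set α)) : Matroid α :=
  initialMatroid M (flagWeight C)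

/-!
Write `g(G) = [rk F₂ - rk G]_q`. Expanding `χ̄` over subsets and grouping the subsets
`S ⊆ F₂ \ F` by the flat `cl(F ∪ S)` gives `χ̄(M|F₂/F) = ∑_G m(F, G) g(G)`, where `m(F, G)` is the
signed count of the `S ⊆ G \ F` with `cl(F ∪ S) = G`. The same grouping applied to the alternating
sum over all `S ⊆ H \ F` shows `∑_{F ⊆ G ⊆ H} m(F, G) = δ(F, H)`: as matrices indexed by the flats
of `M|F₂`, `m ζ = 1`. A one-sided inverse of a square matrix over a commutative ring is two-sided,
so `ζ m = 1`, i.e. `∑_{F₁ ⊆ F ⊆ G} m(F, G) = δ(F₁, G)`, and summing the expansions over the flats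
`F ⊇ F₁` leaves `g(F₁)`. The term `F = F₂` is zero because `M|F₂/F₂` has empty ground set.
-/

open Set
open scoped Matroid

lemma finsum_mem_smul {ι R N : Type*} [Semiring R] [AddCommMonoid N] [Module R N] {s : Set ι}
    (hs : s.Finite) (f : ι → R) (x : N) : (∑ᶠ i ∈ s, f i) • x = ∑ᶠ i ∈ s, f i • x :=
  ((smulAddHom R N).flip x).map_finsum_mem f hs

lemma sum_indicator_eq_finsum_mem {ι β : Type*} [AddCommMonoid β] {T s : Set ι} [Fintype T]
    (hsT : s ⊆ T) (f : ι → β) : ∑ x : T, s.indicator f x = ∑ᶠ x ∈ s, f x := by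
  rw [← finsum_eq_sum_of_fintype, finsum_set_coe_eq_finsum_mem, finsum_mem_def, finsum_mem_def,
    indicator_indicator, inter_eq_right.2 hsT]

lemma finsum_powerset_neg_one_pow_ncard {D : Set α} (hD : D.Finite) :
    ∑ᶠ S ∈ 𝒫 D, (-1 : ℤ) ^ S.ncard = if D = ∅ then 1 else 0 := by
  induction D, hD using Set.Finite.induction_on with
  | empty => simp
  | @insert a D haD hD _ =>
    rw [finsum_mem_powerset_insert hD haD, if_neg (insert_nonempty a D).ne_empty,
      ← finsum_mem_add_distrib hD.powerset]
    refine finsum_mem_eq_zero_of_forall_eq_zero fun t (ht : t ⊆ D) => ?_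
    rw [ncard_insert_of_notMem (fun h => haD (ht h)) (hD.subset ht), pow_succ]
    ring

lemma contract_eq (M : Matroid α) (C : Set α) : contract M C = M ／ C := rfl

lemma cast_rk_eq_eRk {M : Matroid α} {X : Set α} (hX : M.IsRkFinite X) :
    (rk M X : ℕ∞) = M.eRk X := by
  obtain ⟨I, hI, hIfin⟩ := hX.exists_finite_isBasis'
  have hle : ∀ n ∈ {n | ∃ J, M.Indep J ∧ J ⊆ X ∧ J.ncard = n}, n ≤ I.ncard := by
    rintro n ⟨J, hJ, hJX, rfl⟩
    exact ENat.toNat_le_toNat (hI.encard_eq_eRk ▸ hJ.encard_le_eRk_of_subset hJX)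
      (encard_lt_top_iff.2 hIfin).ne
  have hrk : rk M X = I.ncard :=
    le_antisymm (csSup_le ⟨_, I, hI.indep, hI.subset, rfl⟩ hle)
      (le_csSup ⟨_, hle⟩ ⟨I, hI.indep, hI.subset, rfl⟩)
  rw [hrk, hIfin.cast_ncard_eq, hI.encard_eq_eRk]

lemma rk_closure_eq {M : Matroid α} {X : Set α} (hX : M.IsRkFinite X) :
    rk M (M.closure X) = rk M X := by
  exact_mod_cast (cast_rk_eq_eRk hX.closure).trans
    ((M.eRk_closure_eq X).trans (cast_rk_eq_eRk hX).symm)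

lemma eRk_contract_add_eRk (M : Matroid α) {C X : Set α} (hXC : Disjoint X C) :
    (M ／ C).eRk X + M.eRk C = M.eRk (X ∪ C) := by
  obtain ⟨J, hJ⟩ := M.exists_isBasis' C
  obtain ⟨K, hK, hJK⟩ := hJ.indep.subset_isBasis'_of_subset (hJ.subset.trans subset_union_right)
  have hKC : K ∩ C = J := (hJ.eq_of_subset_indep (hK.indep.subset inter_subset_left)
    (subset_inter hJK hJ.subset) inter_subset_right).symm
  have hKJ : (M ／ C).IsBasis' (K \ C) X := by
    have := hK.contract_isBasis' hJ (hK.indep.subset (union_subset sdiff_subset hJK))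
    rwa [union_sdiff_cancel_right hXC.inter_eq.subset] at this
  rw [← hKJ.encard_eq_eRk, ← hJ.encard_eq_eRk, ← hK.encard_eq_eRk, ← hKC,
    encard_sdiff_add_encard_inter]

lemma rk_contract_restrict_add_rk (M : Matroid α) {H F X : Set α} (hH : H.Finite)
    (hFH : F ⊆ H) (hX : X ⊆ H \ F) :
    rk (contract (M.restrict H) F) X + rk M F = rk M (X ∪ F) := by
  have hXH : X ⊆ H := hX.trans sdiff_subset
  have h := eRk_contract_add_eRk (M.restrict H) (subset_sdiff.1 hX).2
  rw [Matroid.restrict_eRk_eq _ hFH, Matroid.restrict_eRk_eq _ (union_subset hXH hFH),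
    ← cast_rk_eq_eRk ((M.restrict H ／ F).isRkFinite_of_finite (hH.subset hXH)),
    ← cast_rk_eq_eRk (M.isRkFinite_of_finite (hH.subset hFH)),
    ← cast_rk_eq_eRk (M.isRkFinite_of_finite ((hH.subset hXH).union (hH.subset hFH)))] at h
  rw [contract_eq]
  exact_mod_cast h

lemma redCharPoly_of_ground_eq_empty {M : Matroid α} (hE : M.E = ∅) : redCharPoly M = 0 := by
  simp [redCharPoly, hE, qAnalogue]

lemma redCharPoly_contract_restrict (M : Matroid α) {H F : Set α} (hH : H.Finite) (hFH : F ⊆ H) :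
    redCharPoly (contract (M.restrict H) F) = ∑ᶠ S ∈ 𝒫 (H \ F),
      (-1 : ℤ) ^ S.ncard • qAnalogue (rk M H - rk M (M.closure (F ∪ S))) := by
  refine finsum_mem_congr rfl fun S (hS : S ⊆ H \ F) => ?_
  have hground : (contract (M.restrict H) F).E = H \ F := rfl
  have hrkH := rk_contract_restrict_add_rk M hH hFH subset_rfl
  have hrkS := rk_contract_restrict_add_rk M hH hFH hS
  rw [sdiff_union_of_subset hFH] at hrkH
  rw [rk_closure_eq (M.isRkFinite_of_finite
    ((hH.subset hFH).union (hH.subset (hS.trans sdiff_subset)))), union_comm, hground]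
  congr 2
  omega

def flatsBelow (M : Matroid α) (H : Set α) : Set (Set α) := {G | M.IsFlat G ∧ G ⊆ H}

lemma finite_flatsBelow (M : Matroid α) {H : Set α} (hH : H.Finite) :
    (flatsBelow M H).Finite :=
  hH.finite_subsets.subset fun _ hG => hG.2

/-- By Rota's crosscut theorem this is the Möbius function `μ(F, G)` of the lattice of flats. -/
noncomputable def mobius (M : Matroid α) (F G : Set α) : ℤ :=
  ∑ᶠ S ∈ {S | S ⊆ G \ F ∧ M.closure (F ∪ S) = G}, (-1) ^ S.ncard

lemma mobius_eq_zero_of_not_subset {M : Matroid α} {F G : Set α} (hF : F ⊆ M.E)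
    (hFG : ¬ F ⊆ G) : mobius M F G = 0 := by
  refine finsum_mem_eq_zero_of_forall_eq_zero fun S ⟨_, hS⟩ => absurd ?_ hFG
  exact hS ▸ M.subset_closure_of_subset' subset_union_left hF

lemma finsum_powerset_closure_eq_finsum_mobius {β : Type*} [AddCommGroup β] {M : Matroid α}
    {F H : Set α} (hH : M.IsFlat H) (hHfin : H.Finite) (hFH : F ⊆ H) (f : Set α → β) :
    ∑ᶠ S ∈ 𝒫 (H \ F), (-1 : ℤ) ^ S.ncard • f (M.closure (F ∪ S)) =
      ∑ᶠ G ∈ flatsBelow M H, mobius M F G • f G := by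
  set fiber : Set α → Set (Set α) := fun G => {S | S ⊆ G \ F ∧ M.closure (F ∪ S) = G}
  have hcover : 𝒫 (H \ F) = ⋃ G ∈ flatsBelow M H, fiber G := by
    ext S
    simp only [mem_powerset_iff, mem_iUnion, exists_prop]
    refine ⟨fun hS => ⟨M.closure (F ∪ S), ⟨M.isFlat_closure _, ?_⟩, ?_, rfl⟩, ?_⟩
    · exact hH.closure ▸ M.closure_subset_closure (union_subset hFH (hS.trans sdiff_subset))
    · exact subset_sdiff.2 ⟨M.subset_closure_of_subset' subset_union_right
        (hS.trans (sdiff_subset.trans hH.subset_ground)), (subset_sdiff.1 hS).2⟩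
    · rintro ⟨G, ⟨_, hGH⟩, hSG, -⟩
      exact hSG.trans (sdiff_subset_sdiff_left hGH)
  have hdisj : (flatsBelow M H).PairwiseDisjoint fiber := by
    intro G _ G' _ hGG'
    exact disjoint_left.2 fun S hS hS' => hGG' (hS.2.symm.trans hS'.2)
  have hfiber : ∀ G ∈ flatsBelow M H, (fiber G).Finite := fun G hG =>
    hHfin.finite_subsets.subset fun S hS => hS.1.trans (sdiff_subset.trans hG.2)
  rw [hcover, finsum_mem_biUnion hdisj (finite_flatsBelow M hHfin) hfiber]
  refine finsum_mem_congr rfl fun G hG => ?_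
  rw [mobius, finsum_mem_smul (hfiber G hG)]
  exact finsum_mem_congr rfl fun S hS => by rw [hS.2]

lemma finsum_mobius_flatsBelow {M : Matroid α} {F H : Set α} (hH : M.IsFlat H)
    (hHfin : H.Finite) (hFH : F ⊆ H) :
    ∑ᶠ G ∈ flatsBelow M H, mobius M F G = if F = H then 1 else 0 := by
  have h := finsum_powerset_closure_eq_finsum_mobius hH hHfin hFH fun _ => (1 : ℤ)
  simp only [smul_eq_mul, mul_one] at h
  rw [← h, finsum_powerset_neg_one_pow_ncard hHfin.sdiff]
  exact if_congr (sdiff_eq_empty.trans ⟨hFH.antisymm, fun h => h ▸ subset_rfl⟩) rfl rfl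

noncomputable def zeta (M : Matroid α) (H : Set α) : Matrix (flatsBelow M H) (flatsBelow M H) ℤ :=
  Matrix.of fun F G => if (F : Set α) ⊆ G then 1 else 0

noncomputable def mobiusMatrix (M : Matroid α) (H : Set α) :
    Matrix (flatsBelow M H) (flatsBelow M H) ℤ :=
  Matrix.of fun F G => mobius M F G

section Incidence

variable {β : Type*} [AddCommGroup β] {M : Matroid α} {H : Set α}
  [Fintype (flatsBelow M H)]

lemma mobiusMatrix_mul_zeta (hH : M.IsFlat H) (hHfin : H.Finite) :
    mobiusMatrix M H * zeta M H = 1 := by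
  ext F K
  simp only [Matrix.mul_apply, Matrix.one_apply, zeta, mobiusMatrix, Matrix.of_apply, mul_ite,
    mul_one, mul_zero]
  by_cases hFK : (F : Set α) ⊆ K
  · rw [if_congr Subtype.ext_iff rfl rfl,
      ← finsum_mobius_flatsBelow K.2.1 (hHfin.subset K.2.2) hFK,
      ← sum_indicator_eq_finsum_mem (T := flatsBelow M H) fun G hG => ⟨hG.1, hG.2.trans K.2.2⟩]
    refine Finset.sum_congr rfl fun G _ => ?_
    simp only [indicator_apply, flatsBelow, mem_ofPred_eq, G.2.1, true_and]
  · rw [if_neg fun h => hFK (by rw [h])]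
    refine Finset.sum_eq_zero fun G _ => ite_eq_right_iff.2 fun hGK =>
      mobius_eq_zero_of_not_subset (F.2.2.trans hH.subset_ground) fun h => hFK (h.trans hGK)

lemma zeta_mul_mobiusMatrix (hH : M.IsFlat H) (hHfin : H.Finite) :
    zeta M H * mobiusMatrix M H = 1 :=
  mul_eq_one_comm.1 (mobiusMatrix_mul_zeta hH hHfin)

lemma sum_zeta_smul_sum_mobiusMatrix_smul (hH : M.IsFlat H) (hHfin : H.Finite)
    (v : flatsBelow M H → β) (F₁ : flatsBelow M H) :
    ∑ F, zeta M H F₁ F • ∑ G, mobiusMatrix M H F G • v G = v F₁ := by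
  simp_rw [Finset.smul_sum, smul_smul]
  rw [Finset.sum_comm]
  simp_rw [← Finset.sum_smul, ← Matrix.mul_apply, zeta_mul_mobiusMatrix hH hHfin,
    Matrix.one_apply, ite_smul, one_smul, zero_smul, Finset.sum_ite_eq, Finset.mem_univ, if_true]

lemma redCharPoly_contract_restrict_eq_sum_mobiusMatrix (hH : M.IsFlat H) (hHfin : H.Finite)
    (F : flatsBelow M H) :
    redCharPoly (contract (M.restrict H) F) =
      ∑ G, mobiusMatrix M H F G • qAnalogue (rk M H - rk M G) := by
  rw [redCharPoly_contract_restrict M hHfin F.2.2,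
    finsum_powerset_closure_eq_finsum_mobius hH hHfin F.2.2 fun G => qAnalogue (rk M H - rk M G),
    ← sum_indicator_eq_finsum_mem subset_rfl]
  simp only [indicator_of_mem (Subtype.mem _), mobiusMatrix, Matrix.of_apply]

lemma sum_zeta_smul_eq_finsum_ssubset (F₁ : flatsBelow M H) {φ : Set α → β} (hφ : φ H = 0) :
    ∑ F, zeta M H F₁ F • φ F = ∑ᶠ F ∈ {F | M.IsFlat F ∧ ↑F₁ ⊆ F ∧ F ⊂ H}, φ F := by
  rw [← sum_indicator_eq_finsum_mem (T := flatsBelow M H) fun F hF => ⟨hF.1, hF.2.2.subset⟩]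
  refine Finset.sum_congr rfl fun F _ => ?_
  rcases F.2.2.eq_or_ssubset with hFH | hFH
  · simp [hFH, hφ]
  · simp only [zeta, Matrix.of_apply, indicator_apply, mem_ofPred_eq, F.2.1, hFH, true_and,
      and_true, ite_smul, one_smul, zero_smul]

end Incidence

theorem qAnalogue_eq_sum_redCharPoly_minor (M : Matroid α) (hE : M.E.Finite)
    {F₁ F₂ : Set α} (h₁ : M.IsFlat F₁) (h₂ : M.IsFlat F₂) (h₁₂ : F₁ ⊆ F₂) :
    qAnalogue (rk M F₂ - rk M F₁) =
      ∑ᶠ F ∈ {F : Set α | M.IsFlat F ∧ F₁ ⊆ F ∧ F ⊂ F₂},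
        redCharPoly (contract (M.restrict F₂) F) := by
  have hF₂fin : F₂.Finite := hE.subset h₂.subset_ground
  have := (finite_flatsBelow M hF₂fin).fintype
  let F₁' : flatsBelow M F₂ := ⟨F₁, h₁, h₁₂⟩
  calc qAnalogue (rk M F₂ - rk M F₁)
      = ∑ F, zeta M F₂ F₁' F • ∑ G, mobiusMatrix M F₂ F G • qAnalogue (rk M F₂ - rk M G) :=
        (sum_zeta_smul_sum_mobiusMatrix_smul h₂ hF₂fin
          (fun G => qAnalogue (rk M F₂ - rk M G)) F₁').symm
    _ = ∑ F, zeta M F₂ F₁' F • redCharPoly (contract (M.restrict F₂) F) := by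
        simp_rw [redCharPoly_contract_restrict_eq_sum_mobiusMatrix h₂ hF₂fin]
    _ = _ := sum_zeta_smul_eq_finsum_ssubset F₁'
        (φ := fun F => redCharPoly (contract (M.restrict F₂) F))
        (redCharPoly_of_ground_eq_empty _root_.sdiff_self)

end MatroidZeta
end

section
/- Let M be a loopless matroid on ground set E, and let F be a proper nonempty flat of M. Then the initial matroid M_{v_F} (with respect to the indicator vector v_F of F) equals the direct sum (M|F) ⊕ (M/F). -/
open Polynomial

namespace MatroidZeta

open scoped Classical

variable {α : Type*}

/-!
For a base `B` of `M`, the `v_F`-weight of `B` is `|B ∩ F|`, which is at most `r(F)` with equality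
exactly when `B ∩ F` is a basis of `F`. For such `B`, `B \ F` is a base of `M / F` precisely
because `B` is a base of `M`, so the `v_F`-maximal bases are the bases of `(M|F) ⊕ (M/F)`.
-/

open Set Matroid

lemma _root_.Matroid.IsBasis.contract_isBase_iff {M : Matroid α} {I X J : Set α}
    (hI : M.IsBasis I X) : (M ／ X).IsBase J ↔ M.IsBase (J ∪ I) ∧ Disjoint J X := by
  have hcl : M.closure (J ∪ X) = M.closure (J ∪ I) :=
    closure_union_congr_right hI.closure_eq_closure.symm
  have hX : X ⊆ M.closure (J ∪ I) :=
    hI.subset_closure.trans (M.closure_subset_closure subset_union_right)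
  rw [isBase_iff_indep_closure_eq, isBase_iff_indep_closure_eq, hI.contract_indep_iff,
    contract_closure_eq, contract_ground, hcl, disjoint_comm]
  constructor
  · rintro ⟨⟨hind, hdis⟩, hspan⟩
    refine ⟨⟨hind, ?_⟩, hdis⟩
    rw [← sdiff_union_of_subset hX, hspan, sdiff_union_of_subset hI.subset_ground]
  · rintro ⟨⟨hind, hspan⟩, hdis⟩
    exact ⟨⟨hind, hdis⟩, by rw [hspan]⟩

lemma _root_.Matroid.IsBasis.ncard_eq_ncard {M : Matroid α} {I J X : Set α}
    (hI : M.IsBasis I X) (hJ : M.IsBasis J X) : I.ncard = J.ncard := by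
  rw [ncard_def, ncard_def, hI.encard_eq_encard hJ]

lemma _root_.Matroid.Indep.ncard_le_of_isBasis {M : Matroid α} {I J X : Set α}
    (hJ : M.Indep J) (hJX : J ⊆ X) (hI : M.IsBasis I X) (hX : M.IsRkFinite X) :
    J.ncard ≤ I.ncard := by
  obtain ⟨J', hJ', hJJ'⟩ := hJ.subset_isBasis_of_subset hJX hI.subset_ground
  exact (ncard_le_ncard hJJ' (hX.finite_of_isBasis hJ')).trans (hJ'.ncard_eq_ncard hI).le

lemma _root_.Matroid.Indep.isBasis_iff_ncard_eq {M : Matroid α} {I J X : Set α}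
    (hJ : M.Indep J) (hJX : J ⊆ X) (hI : M.IsBasis I X) (hX : M.IsRkFinite X) :
    M.IsBasis J X ↔ J.ncard = I.ncard := by
  refine ⟨fun hJb => hJb.ncard_eq_ncard hI, fun hcard => ?_⟩
  obtain ⟨J', hJ', hJJ'⟩ := hJ.subset_isBasis_of_subset hJX hI.subset_ground
  rwa [eq_of_subset_of_ncard_le hJJ' (by rw [hcard, hJ'.ncard_eq_ncard hI])
    (hX.finite_of_isBasis hJ')]

lemma isBase_disjointSum_restrict_contract_iff {M : Matroid α} {F B : Set α} (hF : F ⊆ M.E)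
    (hdis : Disjoint (M ↾ F).E (M ／ F).E) :
    ((M ↾ F).disjointSum (M ／ F) hdis).IsBase B ↔ M.IsBase B ∧ M.IsBasis (B ∩ F) F := by
  rw [disjointSum_isBase_iff, restrict_ground_eq, contract_ground, isBase_restrict_iff hF,
    union_sdiff_cancel hF]
  have hsplit : B ⊆ M.E → B ∩ (M.E \ F) ∪ B ∩ F = B := fun hB => by
    rw [← inter_union_distrib_left, sdiff_union_of_subset hF, inter_eq_self_of_subset_left hB]
  constructor
  · rintro ⟨hBF, hC, hBE⟩
    rw [hBF.contract_isBase_iff, hsplit hBE] at hC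
    exact ⟨hC.1, hBF⟩
  · rintro ⟨hB, hBF⟩
    refine ⟨hBF, ?_, hB.subset_ground⟩
    rw [hBF.contract_isBase_iff, hsplit hB.subset_ground]
    exact ⟨hB, disjoint_sdiff_left.mono_left inter_subset_right⟩

lemma finsum_mem_indicator_eq_ncard {B F : Set α} (hB : B.Finite) :
    ∑ᶠ e ∈ B, (if e ∈ F then (1 : ℝ) else 0) = (B ∩ F).ncard := by
  rw [finsum_mem_eq_finite_toFinset_sum _ hB, Finset.sum_boole,
    ncard_eq_toFinset_card _ (hB.inter_of_left F)]
  congr 2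
  ext e
  simp

lemma initialMatroid_eq_of_isBase_iff {M N : Matroid α} {w : α → ℝ} {c : ℝ} (hNE : N.E = M.E)
    (hle : ∀ B, M.IsBase B → ∑ᶠ e ∈ B, w e ≤ c)
    (hN : ∀ B, N.IsBase B ↔ M.IsBase B ∧ ∑ᶠ e ∈ B, w e = c) : initialMatroid M w = N := by
  have hwt : wt M w = c := by
    obtain ⟨B, hB⟩ := N.exists_isBase
    obtain ⟨hBM, hBc⟩ := (hN B).1 hB
    refine IsGreatest.csSup_eq ⟨⟨B, hBM, hBc.symm⟩, ?_⟩
    rintro _ ⟨B', hB', rfl⟩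
    exact hle B' hB'
  have hex : ∃ N' : Matroid α, N'.E = M.E ∧
      ∀ B, N'.IsBase B ↔ M.IsBase B ∧ ∑ᶠ e ∈ B, w e = wt M w := ⟨N, hNE, hwt ▸ hN⟩
  rw [initialMatroid, dif_pos hex]
  obtain ⟨hE', hB'⟩ := hex.choose_spec
  exact ext_isBase (hE'.trans hNE.symm) fun B _ => (hB' B).trans (hwt ▸ hN B).symm

theorem initialMatroid_indicator_eq_disjointSum_general (M : Matroid α) (hE : M.E.Finite)
    {F : Set α} (hFE : F ⊂ M.E)
    (hdis : Disjoint (M.restrict F).E (contract M F).E) :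
    initialMatroid M (fun e => if e ∈ F then (1 : ℝ) else 0) =
      Matroid.disjointSum (M.restrict F) (contract M F) hdis := by
  obtain ⟨I, hI⟩ := M.exists_isBasis F hFE.subset
  have hF : M.IsRkFinite F := M.isRkFinite_of_finite (hE.subset hFE.subset)
  have hweight : ∀ B, M.IsBase B →
      ∑ᶠ e ∈ B, (if e ∈ F then (1 : ℝ) else 0) = (B ∩ F).ncard :=
    fun B hB => finsum_mem_indicator_eq_ncard (hE.subset hB.subset_ground)
  refine initialMatroid_eq_of_isBase_iff (c := I.ncard) ?_ (fun B hB => ?_) (fun B => ?_)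
  · simp [contract, union_sdiff_cancel hFE.subset]
  · rw [hweight B hB]
    exact_mod_cast (hB.indep.inter_right F).ncard_le_of_isBasis inter_subset_right hI hF
  · refine (isBase_disjointSum_restrict_contract_iff hFE.subset hdis).trans
      (and_congr_right fun hB => ?_)
    rw [hweight B hB, Nat.cast_inj]
    exact (hB.indep.inter_right F).isBasis_iff_ncard_eq inter_subset_right hI hF

theorem initialMatroid_indicator_eq_disjointSum (M : Matroid α) (hE : M.E.Finite)
    (hM : Loopless M) {F : Set α} (hF : M.IsFlat F) (hFne : F.Nonempty) (hFE : F ⊂ M.E)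
    (hdis : Disjoint (M.restrict F).E (contract M F).E) :
    initialMatroid M (fun e => if e ∈ F then (1 : ℝ) else 0) =
      Matroid.disjointSum (M.restrict F) (contract M F) hdis :=
  initialMatroid_indicator_eq_disjointSum_general M hE hFE hdis

end MatroidZeta
end

section
/- Let M be a loopless matroid and F ∈ N°(M) a flag of nonempty proper flats not containing the ground set E. Then the reduced characteristic polynomial χ̄_{M_F}(q) is divisible by (q−1)^{#F} in ℤ[q]. -/
open Polynomial

namespace MatroidZeta

open scoped Classical

variable {α : Type*}

/-!
The bases of the initial matroid `M_C` of a chain `∅ ⊂ F₁ ⊂ ⋯ ⊂ F_k ⊂ E` are the bases `B` of `M`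
with `|B ∩ Fᵢ| = rk Fᵢ` for all `i`, i.e. the bases of the direct sum of the `k + 1` minors
`(M ↾ Fᵢ₊₁) ／ Fᵢ`, whose ground sets `Fᵢ₊₁ \ Fᵢ` are nonempty. The characteristic polynomial is
multiplicative on direct sums and each factor vanishes at `q = 1`, so `(q - 1)^(k+1)` divides
`χ_{M_C} = (q - 1) χ̄_{M_C}`.
-/

open Matroid

section Rank

variable {M N : Matroid α} {I X Y R : Set α}

lemma rk_eq_ncard_of_isBasis' [M.RankFinite] (hI : M.IsBasis' I X) : rk M X = I.ncard := by
  refine IsGreatest.csSup_eq ⟨⟨I, hI.indep, hI.subset, rfl⟩, ?_⟩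
  rintro _ ⟨J, hJ, hJX, rfl⟩
  have h := (hJ.encard_le_eRk_of_subset hJX).trans hI.encard_eq_eRk.symm.le
  rwa [← hJ.finite.cast_ncard_eq, ← hI.indep.finite.cast_ncard_eq, Nat.cast_le] at h

lemma ncard_le_rk [M.RankFinite] (hI : M.Indep I) (hIX : I ⊆ X) : I.ncard ≤ rk M X := by
  obtain ⟨J, hJ, hIJ⟩ := hI.subset_isBasis'_of_subset hIX
  rw [rk_eq_ncard_of_isBasis' hJ]
  exact Set.ncard_le_ncard hIJ hJ.indep.finite

lemma rk_mono [M.RankFinite] (hXY : X ⊆ Y) : rk M X ≤ rk M Y := by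
  obtain ⟨I, hI⟩ := M.exists_isBasis' X
  exact rk_eq_ncard_of_isBasis' hI ▸ ncard_le_rk hI.indep (hI.subset.trans hXY)

lemma isBasis_iff_ncard_eq_rk [M.RankFinite] (hI : M.Indep I) (hIX : I ⊆ X)
    (hX : X ⊆ M.E) : M.IsBasis I X ↔ I.ncard = rk M X := by
  refine ⟨fun h => (rk_eq_ncard_of_isBasis' h.isBasis').symm, fun h => ?_⟩
  obtain ⟨J, hJ, hIJ⟩ := hI.subset_isBasis_of_subset hIX
  rwa [Set.eq_of_subset_of_ncard_le hIJ (h ▸ (rk_eq_ncard_of_isBasis' hJ.isBasis').ge)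
    hJ.indep.finite]

lemma rk_restrict [M.RankFinite] (hXR : X ⊆ R) : rk (M ↾ R) X = rk M X := by
  obtain ⟨I, hI⟩ := M.exists_isBasis' X
  have hIR : (M ↾ R).IsBasis' I X := by
    rw [isBasis'_restrict_iff, Set.inter_eq_left.mpr hXR]
    exact ⟨hI, hI.subset.trans hXR⟩
  rw [rk_eq_ncard_of_isBasis' hI, rk_eq_ncard_of_isBasis' hIR]

instance disjointSum_finite {h : Disjoint M.E N.E} [M.Finite] [N.Finite] :
    (M.disjointSum N h).Finite :=
  ⟨by simpa using M.ground_finite.union N.ground_finite⟩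

lemma rk_disjointSum {h : Disjoint M.E N.E} [M.Finite] [N.Finite] (hX : X ⊆ M.E ∪ N.E) :
    rk (M.disjointSum N h) X = rk M (X ∩ M.E) + rk N (X ∩ N.E) := by
  obtain ⟨I, hI⟩ := (M.disjointSum N h).exists_isBasis X (by simpa using hX)
  obtain ⟨hIM, hIN, -, -⟩ := disjointSum_isBasis_iff.mp hI
  rw [rk_eq_ncard_of_isBasis' hI.isBasis', rk_eq_ncard_of_isBasis' hIM.isBasis',
    rk_eq_ncard_of_isBasis' hIN.isBasis', ← Set.ncard_union_eq (h.mono Set.inter_subset_right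
      Set.inter_subset_right) hIM.indep.finite hIN.indep.finite, ← Set.inter_union_distrib_left,
    Set.inter_eq_left.mpr (by simpa using hI.indep.subset_ground)]

end Rank

section Polynomials

lemma finsum_subsets_eq_sum_powerset {R : Type*} [AddCommMonoid R] (s : Finset α)
    (f : Set α → R) : ∑ᶠ S ∈ {S : Set α | S ⊆ s}, f S = ∑ T ∈ s.powerset, f T := by
  have hs : {S : Set α | S ⊆ s} = (↑) '' (s.powerset : Set (Finset α)) := by
    ext S
    simp only [Finset.coe_powerset, Set.mem_image, Set.mem_preimage, Set.mem_powerset_iff]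
    exact ⟨fun h => ⟨(s.finite_toSet.subset h).toFinset, by simpa using h, by simp⟩,
      by rintro ⟨T, hT, rfl⟩; exact hT⟩
  rw [hs, finsum_mem_image Finset.coe_injective.injOn, finsum_mem_coe_finset]

lemma sum_powerset_union_mul {R : Type*} [CommSemiring R] {a b : Finset α} (hab : Disjoint a b)
    (f g : Finset α → R) :
    ∑ T ∈ (a ∪ b).powerset, f (T ∩ a) * g (T ∩ b) =
      (∑ T ∈ a.powerset, f T) * ∑ T ∈ b.powerset, g T := by
  rw [Finset.sum_mul_sum, ← Finset.sum_product']
  refine Finset.sum_nbij' (fun T => (T ∩ a, T ∩ b)) (fun p => p.1 ∪ p.2) ?_ ?_ ?_ ?_ ?_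
  · simp
  · simp only [Finset.mem_product, Finset.mem_powerset]
    rintro ⟨T, U⟩ ⟨hT, hU⟩
    exact Finset.union_subset_union hT hU
  · simp only [Finset.mem_powerset]
    intro T hT
    rw [← Finset.inter_union_distrib_left, Finset.inter_eq_left.mpr hT]
  · simp only [Finset.mem_product, Finset.mem_powerset]
    rintro ⟨T, U⟩ ⟨hT, hU⟩
    dsimp only at hT hU ⊢
    rw [Finset.union_inter_distrib_right, Finset.union_inter_distrib_right,
      Finset.inter_eq_left.mpr hT, Finset.inter_eq_left.mpr hU,
      Finset.disjoint_iff_inter_eq_empty.mp (hab.symm.mono_left hU),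
      Finset.disjoint_iff_inter_eq_empty.mp (hab.mono_left hT), Finset.union_empty,
      Finset.empty_union]
  · intro T _
    rfl

variable {M N : Matroid α}

lemma charPoly_eq_sum_powerset {s : Finset α} (hs : (s : Set α) = M.E) :
    charPoly M = ∑ T ∈ s.powerset, (-1) ^ T.card * X ^ (rk M M.E - rk M T) := by
  rw [charPoly, ← hs, finsum_subsets_eq_sum_powerset]
  simp [zsmul_eq_mul]

lemma redCharPoly_eq_sum_powerset {s : Finset α} (hs : (s : Set α) = M.E) :
    redCharPoly M = ∑ T ∈ s.powerset, (-1) ^ T.card * qAnalogue (rk M M.E - rk M T) := by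
  rw [redCharPoly, ← hs, finsum_subsets_eq_sum_powerset]
  simp [zsmul_eq_mul]

lemma sub_one_mul_redCharPoly [M.Finite] (hne : M.E.Nonempty) :
    (X - 1) * redCharPoly M = charPoly M := by
  set s := M.ground_finite.toFinset
  have hs : (s : Set α) = M.E := M.ground_finite.coe_toFinset
  have hsum : ∑ T ∈ s.powerset, ((-1) ^ T.card : ℤ[X]) = 0 := by
    exact_mod_cast Finset.sum_powerset_neg_one_pow_card_of_nonempty (by simpa [s] using hne)
  have hterm (n c : ℕ) : (X - 1) * ((-1) ^ c * qAnalogue n) = (-1) ^ c * X ^ n - (-1) ^ c := by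
    rw [qAnalogue, mul_left_comm, mul_geom_sum, mul_sub_one]
  rw [redCharPoly_eq_sum_powerset hs, charPoly_eq_sum_powerset hs, Finset.mul_sum]
  simp only [hterm]
  rw [Finset.sum_sub_distrib, hsum, sub_zero]

lemma charPoly_disjointSum {h : Disjoint M.E N.E} [M.Finite] [N.Finite] :
    charPoly (M.disjointSum N h) = charPoly M * charPoly N := by
  set a := M.ground_finite.toFinset
  set b := N.ground_finite.toFinset
  have ha : (a : Set α) = M.E := M.ground_finite.coe_toFinset
  have hb : (b : Set α) = N.E := N.ground_finite.coe_toFinset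
  have hab : Disjoint a b := by rwa [← Finset.disjoint_coe, ha, hb]
  have hE : ((a ∪ b : Finset α) : Set α) = (M.disjointSum N h).E := by simp [ha, hb]
  rw [charPoly_eq_sum_powerset hE, charPoly_eq_sum_powerset ha, charPoly_eq_sum_powerset hb,
    ← sum_powerset_union_mul hab]
  refine Finset.sum_congr rfl fun T hT => ?_
  have hTE : (T : Set α) ⊆ M.E ∪ N.E := by
    rw [← ha, ← hb, ← Finset.coe_union, Finset.coe_subset]
    exact Finset.mem_powerset.mp hT
  have hcard : T.card = (T ∩ a).card + (T ∩ b).card := by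
    rw [← Finset.card_union_of_disjoint (hab.mono Finset.inter_subset_right
      Finset.inter_subset_right), ← Finset.inter_union_distrib_left,
      Finset.inter_eq_left.mpr (Finset.mem_powerset.mp hT)]
  have hMle : rk M (T ∩ M.E) ≤ rk M M.E := rk_mono Set.inter_subset_right
  have hNle : rk N (T ∩ N.E) ≤ rk N N.E := rk_mono Set.inter_subset_right
  rw [disjointSum_ground_eq, rk_disjointSum hTE, rk_disjointSum subset_rfl,
    Set.union_inter_cancel_left, Set.union_inter_cancel_right, Finset.coe_inter, Finset.coe_inter,
    ha, hb, hcard,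
    show rk M M.E + rk N N.E - (rk M (T ∩ M.E) + rk N (T ∩ N.E)) =
      (rk M M.E - rk M (T ∩ M.E)) + (rk N N.E - rk N (T ∩ N.E)) by omega]
  ring

end Polynomials

section Structure

variable {M : Matroid α} {B G : Set α}

lemma contract_isBase_iff_of_isBasis_inter (hG : M.IsBasis (B ∩ G) G) :
    (M ／ G).IsBase (B \ G) ↔ M.IsBase B := by
  have hBG : B \ G ∪ B ∩ G = B := Set.sdiff_union_inter B G
  refine ⟨fun h => ?_, fun h => ?_⟩
  · rw [hG.contract_eq_contract_delete, delete_isBase_iff] at h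
    have h' := hG.indep.union_isBasis_union_of_contract_isBasis h
    rw [hBG, contract_ground, Set.sdiff_sdiff, Set.union_sdiff_cancel Set.inter_subset_right] at h'
    refine h'.isBase_of_spanning ?_
    rw [spanning_iff_closure_eq, closure_union_congr_right hG.closure_eq_closure,
      Set.sdiff_union_of_subset hG.subset_ground, closure_ground]
  · have h' := h.isBasis_ground.contract_isBasis hG (by rw [hBG]; exact h.indep)
    rwa [← contract_ground, isBasis_ground_iff] at h'

lemma isBase_disjointSum_contract_iff [M.RankFinite] {N : Matroid α} {C : Finset (Set α)}
    (hGE : G ⊆ M.E) (hCG : ∀ F ∈ C, F ⊆ G) (hNE : N.E = G)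
    (hNB : ∀ B, N.IsBase B ↔ (M ↾ G).IsBase B ∧ ∀ F ∈ C, (B ∩ F).ncard = rk (M ↾ G) F)
    (h : Disjoint N.E (M ／ G).E) :
    (N.disjointSum (M ／ G) h).IsBase B ↔
      M.IsBase B ∧ ∀ F ∈ insert G C, (B ∩ F).ncard = rk M F := by
  have hC : (∀ F ∈ C, (B ∩ G ∩ F).ncard = rk (M ↾ G) F) ↔ ∀ F ∈ C, (B ∩ F).ncard = rk M F := by
    refine forall₂_congr fun F hF => ?_
    rw [Set.inter_assoc, Set.inter_eq_right.mpr (hCG F hF), rk_restrict (hCG F hF)]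
  rw [disjointSum_isBase_iff, hNE, hNB, hC, contract_ground, isBase_restrict_iff hGE,
    Finset.forall_mem_insert, Set.union_sdiff_cancel hGE]
  constructor
  · rintro ⟨⟨hBG, hCB⟩, hBc, hBE⟩
    rw [← Set.inter_sdiff_assoc, Set.inter_eq_left.mpr hBE] at hBc
    exact ⟨(contract_isBase_iff_of_isBasis_inter hBG).mp hBc,
      (rk_eq_ncard_of_isBasis' hBG.isBasis').symm, hCB⟩
  · rintro ⟨hB, hBG, hCB⟩
    have hBG' : M.IsBasis (B ∩ G) G :=
      (isBasis_iff_ncard_eq_rk (hB.indep.inter_right G) Set.inter_subset_right hGE).mpr hBG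
    refine ⟨⟨hBG', hCB⟩, ?_, hB.subset_ground⟩
    rw [← Set.inter_sdiff_assoc, Set.inter_eq_left.mpr hB.subset_ground]
    exact (contract_isBase_iff_of_isBasis_inter hBG').mpr hB

end Structure

lemma exists_forall_le_of_isChain {β : Type*} [PartialOrder β] {C : Finset β}
    (hC : IsChain (· ≤ ·) (C : Set β)) (hne : C.Nonempty) : ∃ G ∈ C, ∀ F ∈ C, F ≤ G := by
  obtain ⟨G, hG⟩ := C.exists_maximal hne
  refine ⟨G, hG.prop, fun F hF => ?_⟩
  rcases hC.total hF hG.prop with hFG | hGF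
  · exact hFG
  · exact hG.le_of_ge hF hGF

theorem exists_isBase_iff_and_pow_dvd_charPoly (M : Matroid α) [M.Finite] (C : Finset (Set α))
    (hC : IsChain (· ⊆ ·) (C : Set (Set α))) (hCE : ∀ F ∈ C, F.Nonempty ∧ F ⊂ M.E)
    (hne : M.E.Nonempty) :
    ∃ N : Matroid α, N.E = M.E ∧
      (∀ B, N.IsBase B ↔ M.IsBase B ∧ ∀ F ∈ C, (B ∩ F).ncard = rk M F) ∧
      (X - 1) ^ (C.card + 1) ∣ charPoly N := by
  induction C using Finset.strongInduction generalizing M with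
  | H C ih =>
    rcases C.eq_empty_or_nonempty with rfl | hCne
    · exact ⟨M, rfl, by simp, by simpa using Dvd.intro _ (sub_one_mul_redCharPoly hne)⟩
    obtain ⟨G, hGC, hCG⟩ := exists_forall_le_of_isChain hC hCne
    obtain ⟨hGne, hGE⟩ := hCE G hGC
    have : (M ↾ G).Finite := ⟨M.ground_finite.subset hGE.subset⟩
    obtain ⟨N, hNE, hNB, hNdvd⟩ := ih (C.erase G) (C.erase_ssubset hGC) (M ↾ G)
      (hC.mono (by simp))
      (fun F hF => ⟨(hCE F (Finset.mem_of_mem_erase hF)).1,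
        (hCG F (Finset.mem_of_mem_erase hF)).ssubset_of_ne (Finset.ne_of_mem_erase hF)⟩) hGne
    rw [restrict_ground_eq] at hNE
    have : N.Finite := ⟨hNE ▸ M.ground_finite.subset hGE.subset⟩
    have hdisj : Disjoint N.E (M ／ G).E := by
      rw [hNE, contract_ground]
      exact Set.disjoint_sdiff_right
    refine ⟨N.disjointSum (M ／ G) hdisj, by simp [hNE, Set.union_sdiff_cancel hGE.subset],
      fun B => ?_, ?_⟩
    · rw [isBase_disjointSum_contract_iff hGE.subset
        (fun F hF => hCG F (Finset.mem_of_mem_erase hF)) hNE hNB, Finset.insert_erase hGC]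
    · rw [charPoly_disjointSum, ← Finset.card_erase_add_one hGC, pow_succ]
      exact mul_dvd_mul hNdvd (Dvd.intro _ (sub_one_mul_redCharPoly (Set.nonempty_of_ssubset hGE)))

section FlagMatroid

variable {M N : Matroid α} {C : Finset (Set α)}

lemma finsum_flagWeight {B : Set α} (hB : B.Finite) :
    ∑ᶠ e ∈ B, flagWeight C e = ∑ F ∈ C, ((B ∩ F).ncard : ℝ) := by
  rw [finsum_mem_eq_finite_toFinset_sum _ hB]
  simp only [flagWeight]
  rw [Finset.sum_comm]
  refine Finset.sum_congr rfl fun F _ => ?_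
  rw [Finset.sum_boole, ← Set.ncard_coe_finset]
  congr 3
  ext
  simp

lemma initialMatroid_eq {w : α → ℝ} (hNE : N.E = M.E)
    (hNB : ∀ B, N.IsBase B ↔ M.IsBase B ∧ ∑ᶠ e ∈ B, w e = wt M w) : initialMatroid M w = N := by
  have hex : ∃ N : Matroid α, N.E = M.E ∧
      ∀ B, N.IsBase B ↔ M.IsBase B ∧ ∑ᶠ e ∈ B, w e = wt M w := ⟨N, hNE, hNB⟩
  rw [initialMatroid, dif_pos hex]
  exact ext_isBase (hex.choose_spec.1.trans hNE.symm)
    fun B _ => (hex.choose_spec.2 B).trans (hNB B).symm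

lemma flagMatroid_eq [M.RankFinite] (hNE : N.E = M.E)
    (hNB : ∀ B, N.IsBase B ↔ M.IsBase B ∧ ∀ F ∈ C, (B ∩ F).ncard = rk M F) :
    flagMatroid M C = N := by
  have hle : ∀ B, M.IsBase B → ∀ F ∈ C, ((B ∩ F).ncard : ℝ) ≤ rk M F := fun B hB F _ =>
    Nat.cast_le.mpr (ncard_le_rk (hB.indep.inter_right F) Set.inter_subset_right)
  have hweight : ∀ B, M.IsBase B → (∑ᶠ e ∈ B, flagWeight C e = ∑ F ∈ C, (rk M F : ℝ) ↔
      ∀ F ∈ C, (B ∩ F).ncard = rk M F) := by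
    intro B hB
    rw [finsum_flagWeight hB.finite, Finset.sum_eq_sum_iff_of_le (hle B hB)]
    simp only [Nat.cast_inj]
  have hwt : wt M (flagWeight C) = ∑ F ∈ C, (rk M F : ℝ) := by
    obtain ⟨B₀, hB₀⟩ := N.exists_isBase
    obtain ⟨hB₀M, hB₀C⟩ := (hNB B₀).mp hB₀
    refine IsGreatest.csSup_eq ⟨⟨B₀, hB₀M, ((hweight B₀ hB₀M).mpr hB₀C).symm⟩, ?_⟩
    rintro _ ⟨B, hB, rfl⟩
    rw [finsum_flagWeight hB.finite]
    exact Finset.sum_le_sum (hle B hB)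
  refine initialMatroid_eq hNE fun B => ?_
  rw [hNB, hwt]
  exact and_congr_right fun hB => (hweight B hB).symm

end FlagMatroid

theorem pow_sub_one_dvd_redCharPoly_flagMatroid (M : Matroid α) (hE : M.E.Finite)
    (hM : Loopless M) {C : Finset (Set α)} (hC : C ∈ flagsCirc M) :
    ((X : Polynomial ℤ) - 1) ^ C.card ∣ redCharPoly (flagMatroid M C) := by
  obtain ⟨⟨hflats, hchain⟩, hEC⟩ := hC
  have : M.Finite := ⟨hE⟩
  rcases C.eq_empty_or_nonempty with rfl | ⟨G, hG⟩
  · simp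
  have hCE : ∀ F ∈ C, F.Nonempty ∧ F ⊂ M.E := fun F hF =>
    ⟨Set.empty_ssubset.mp (hM ▸ (hflats F hF).2),
      (hflats F hF).1.subset_ground.ssubset_of_ne fun h => hEC (h ▸ hF)⟩
  have hne : M.E.Nonempty := (hCE G hG).1.mono (hCE G hG).2.subset
  obtain ⟨N, hNE, hNB, hdvd⟩ := exists_isBase_iff_and_pow_dvd_charPoly M C hchain hCE hne
  have : N.Finite := ⟨hNE ▸ hE⟩
  rw [← sub_one_mul_redCharPoly (hNE ▸ hne), pow_succ'] at hdvd
  rw [flagMatroid_eq hNE hNB]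
  exact (mul_dvd_mul_iff_left (X_sub_C_ne_zero 1)).mp hdvd

end MatroidZeta
end
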